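/- Let a₋₁ > 0 and a₁ > 0, and define a(u) = a₋₁ for u ≤ 0 and a(u) = a₁ for u > 0, A(u) = u·a(u), and ω as above. Then for all x, y ∈ ℝ, (A(x) − A(y))·(ω(x) − ω(y)) ≥ min(a₋₁, a₁)·(x − y)². -/
import Mathlib


theorem flux_enthalpy_monotone (aminus aplus : ℝ) (ham : 0 < aminus) (hap : 0 < aplus)
    (A ω : ℝ → ℝ)
    (hA : ∀ u : ℝ, A u = if u ≤ 0 then aminus * u else aplus * u)
    (hω : ∀ ρ : ℝ, ω ρ = if ρ < 0 then ρ - 1 else if 0 < ρ then ρ else -1) :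
    ∀ x y : ℝ, min aminus aplus * (x - y) ^ 2 ≤ (A x - A y) * (ω x - ω y) := by
  have hω' : ∀ ρ : ℝ, ω ρ = if ρ ≤ 0 then ρ - 1 else ρ := by
    intro ρ
    rw [hω]
    rcases lt_trichotomy ρ 0 with h | h | h
    · simp [h, h.le]
    · simp [h]
    · simp [h, not_le.2 h, not_lt.2 h.le]
  intro x y
  have hm1 : min aminus aplus ≤ aminus := min_le_left _ _
  have hm2 : min aminus aplus ≤ aplus := min_le_right _ _
  have hm3 : 0 < min aminus aplus := lt_min ham hap
  rw [hA, hA, hω', hω']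
  rcases le_or_gt x 0 with hx | hx <;> rcases le_or_gt y 0 with hy | hy
  · rw [if_pos hx, if_pos hy, if_pos hx, if_pos hy]
    nlinarith [mul_nonneg (sub_nonneg.2 hm1) (sq_nonneg (x - y))]
  · rw [if_pos hx, if_neg (not_le.2 hy), if_pos hx, if_neg (not_le.2 hy)]
    nlinarith [mul_nonneg (sub_nonneg.2 hm1) (sq_nonneg x),
      mul_nonneg (sub_nonneg.2 hm2) (sq_nonneg y),
      mul_nonneg (mul_nonneg (by linarith : (0:ℝ) ≤ aminus + aplus - 2 * min aminus aplus)
        (neg_nonneg.2 hx)) hy.le,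
      mul_nonneg (neg_nonneg.2 (mul_nonpos_of_nonpos_of_nonneg hx hy.le)) ham.le]
  · rw [if_neg (not_le.2 hx), if_pos hy, if_neg (not_le.2 hx), if_pos hy]
    nlinarith [mul_nonneg (sub_nonneg.2 hm2) (sq_nonneg x),
      mul_nonneg (sub_nonneg.2 hm1) (sq_nonneg y),
      mul_nonneg (mul_nonneg (by linarith : (0:ℝ) ≤ aminus + aplus - 2 * min aminus aplus)
        hx.le) (neg_nonneg.2 hy),
      mul_nonneg (neg_nonneg.2 (mul_nonpos_of_nonneg_of_nonpos hx.le hy)) hap.le]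
  · rw [if_neg (not_le.2 hx), if_neg (not_le.2 hy), if_neg (not_le.2 hx), if_neg (not_le.2 hy)]
    nlinarith [mul_nonneg (sub_nonneg.2 hm2) (sq_nonneg (x - y))]
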